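/- arXiv:1911.01859 — 5 statements merged into one kernel-verified Lean document; each statement's English description precedes it below -/
import Mathlib

section
/- With the CAM setup, for every γ ∈ ℝ^k one has MSE(θ̂_γ) − MSE(θ̂₀) = γᵀ(Λ + B Bᵀ)γ − 2 γᵀ(Ω + b(θ̂₀)·B). -/
/-!
With `X := θ̂₀ - θ` and `D_j := (θ̂₀M)_j - (θ̂M)_j` one has `(X - γᵀD)² - X² = (γᵀD)² - 2 X γᵀD`,
so the MSE difference is the quadratic form of the second-moment matrix
`E[D Dᵀ] = Λ + B Bᵀ` minus twice `γᵀ E[X D]`, where `E[X D_j] = Cov(θ̂₀, D_j) + b(θ̂₀) B_j`.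
Independence of `θ̂M` from `θ̂₀` gives `Cov(θ̂₀, D_j) = Cov(θ̂₀, (θ̂₀M)_j) = Ω_j`.
-/

open MeasureTheory ProbabilityTheory

noncomputable def cov {Ω : Type*} [MeasurableSpace Ω] (μ : Measure Ω) (f g : Ω → ℝ) : ℝ :=
  ∫ ω, (f ω - ∫ ω', f ω' ∂μ) * (g ω - ∫ ω', g ω' ∂μ) ∂μ

lemma cov_eq_covariance {Ω : Type*} [MeasurableSpace Ω] (μ : Measure Ω) (f g : Ω → ℝ) :
    cov μ f g = cov[f, g; μ] :=
  rfl

section SecondMoments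

variable {Ω ι : Type*} [MeasurableSpace Ω] {μ : Measure Ω} [Fintype ι]

lemma integral_sub_sum_mul_sq {X : Ω → ℝ} {D : ι → Ω → ℝ} (hX : MemLp X 2 μ)
    (hD : ∀ j, MemLp (D j) 2 μ) (γ : ι → ℝ) :
    ∫ ω, (X ω - ∑ j, γ j * D j ω) ^ 2 ∂μ
      = ∫ ω, X ω ^ 2 ∂μ - 2 * ∑ j, γ j * ∫ ω, X ω * D j ω ∂μ
        + ∑ i, ∑ j, γ i * (∫ ω, D i ω * D j ω ∂μ) * γ j := by
  have hXD (j : ι) : Integrable (fun ω => X ω * D j ω) μ := hX.integrable_mul (hD j)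
  have hDD (i j : ι) : Integrable (fun ω => D i ω * D j ω) μ := (hD i).integrable_mul (hD j)
  have hpt (ω : Ω) : (X ω - ∑ j, γ j * D j ω) ^ 2
      = X ω ^ 2 - 2 * ∑ j, γ j * (X ω * D j ω)
        + ∑ i, ∑ j, γ i * (D i ω * D j ω) * γ j := by
    have hmul_sum : X ω * ∑ j, γ j * D j ω = ∑ j, γ j * (X ω * D j ω) := by
      rw [Finset.mul_sum]
      exact Finset.sum_congr rfl fun j _ => by ring
    have hsq : (∑ j, γ j * D j ω) ^ 2 = ∑ i, ∑ j, γ i * (D i ω * D j ω) * γ j := by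
      rw [sq, Finset.sum_mul_sum]
      exact Finset.sum_congr rfl fun i _ => Finset.sum_congr rfl fun j _ => by ring
    rw [← hmul_sum, ← hsq]
    ring
  have hlinInt : Integrable (fun ω => ∑ j, γ j * (X ω * D j ω)) μ :=
    integrable_finsetSum _ fun j _ => (hXD j).const_mul _
  have hquadInt (i : ι) : Integrable (fun ω => ∑ j, γ i * (D i ω * D j ω) * γ j) μ :=
    integrable_finsetSum _ fun j _ => ((hDD i j).const_mul _).mul_const _
  have hleadInt : Integrable (fun ω => X ω ^ 2 - 2 * ∑ j, γ j * (X ω * D j ω)) μ :=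
    hX.integrable_sq.sub (hlinInt.const_mul 2)
  simp_rw [hpt]
  rw [integral_add hleadInt (integrable_finsetSum _ fun i _ => hquadInt i),
    integral_sub hX.integrable_sq (hlinInt.const_mul 2), integral_const_mul,
    integral_finsetSum _ fun j _ => (hXD j).const_mul _, integral_finsetSum _ fun i _ => hquadInt i]
  simp_rw [integral_finsetSum _ fun j _ => ((hDD _ j).const_mul _).mul_const _,
    integral_mul_const, integral_const_mul]

lemma integral_mul_eq_covariance_add [IsProbabilityMeasure μ] {X Y : Ω → ℝ}
    (hX : MemLp X 2 μ) (hY : MemLp Y 2 μ) :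
    ∫ ω, X ω * Y ω ∂μ = cov[X, Y; μ] + (∫ ω, X ω ∂μ) * ∫ ω, Y ω ∂μ := by
  rw [covariance_eq_sub hX hY, sub_add_cancel]
  rfl

lemma covariance_sub_right_of_indepFun [IsFiniteMeasure μ] {X Y Z : Ω → ℝ}
    (hXZ : IndepFun X Z μ) (hX : MemLp X 2 μ) (hY : MemLp Y 2 μ) (hZ : MemLp Z 2 μ) :
    cov[X, fun ω => Y ω - Z ω; μ] = cov[X, Y; μ] := by
  rw [covariance_fun_sub_right hX hY hZ, hXZ.covariance_eq_zero hX hZ, sub_zero]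

end SecondMoments

theorem stmt0_general {Ωs : Type*} [MeasurableSpace Ωs] (P : Measure Ωs) [IsProbabilityMeasure P]
    (k : ℕ) (θ : ℝ) (θhat0 : Ωs → ℝ) (θhat0M θhatM : Ωs → Fin k → ℝ)
    (hL2_0 : MemLp θhat0 2 P)
    (hL2_0M : ∀ j, MemLp (fun ω => θhat0M ω j) 2 P)
    (hL2_M : ∀ j, MemLp (fun ω => θhatM ω j) 2 P)
    (hindep : IndepFun (fun ω => (θhat0 ω, θhat0M ω)) θhatM P)
    (γ : Fin k → ℝ) :
    (∫ ω, (θhat0 ω - (∑ j, γ j * (θhat0M ω j - θhatM ω j)) - θ) ^ 2 ∂P)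
        - (∫ ω, (θhat0 ω - θ) ^ 2 ∂P)
      = (∑ i, ∑ j, γ i *
            (cov P (fun ω => θhat0M ω i - θhatM ω i) (fun ω => θhat0M ω j - θhatM ω j)
              + (∫ ω, (θhat0M ω i - θhatM ω i) ∂P) * (∫ ω, (θhat0M ω j - θhatM ω j) ∂P))
            * γ j)
        - 2 * ∑ j, γ j *
            (cov P θhat0 (fun ω => θhat0M ω j)
              + ((∫ ω, θhat0 ω ∂P) - θ) * (∫ ω, (θhat0M ω j - θhatM ω j) ∂P)) := by
  have hX : MemLp (fun ω => θhat0 ω - θ) 2 P := hL2_0.sub (memLp_const θ)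
  have hD (j : Fin k) : MemLp (fun ω => θhat0M ω j - θhatM ω j) 2 P := (hL2_0M j).sub (hL2_M j)
  have hI (j : Fin k) : IndepFun θhat0 (fun ω => θhatM ω j) P :=
    hindep.comp measurable_fst (measurable_pi_apply j)
  have hcross (j : Fin k) : ∫ ω, (θhat0 ω - θ) * (θhat0M ω j - θhatM ω j) ∂P
      = cov P θhat0 (fun ω => θhat0M ω j)
        + ((∫ ω, θhat0 ω ∂P) - θ) * ∫ ω, (θhat0M ω j - θhatM ω j) ∂P := by
    have hint : Integrable θhat0 P := hL2_0.integrable one_le_two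
    rw [integral_mul_eq_covariance_add hX (hD j), covariance_sub_const_left hint,
      covariance_sub_right_of_indepFun (hI j) hL2_0 (hL2_0M j) (hL2_M j),
      integral_sub hint (integrable_const θ), integral_const, cov_eq_covariance]
    simp only [probReal_univ, smul_eq_mul, one_mul]
  have hsquare (i j : Fin k) := integral_mul_eq_covariance_add (hD i) (hD j)
  calc _ = (∫ ω, ((θhat0 ω - θ) - ∑ j, γ j * (θhat0M ω j - θhatM ω j)) ^ 2 ∂P)
        - ∫ ω, (θhat0 ω - θ) ^ 2 ∂P := by simp only [sub_right_comm]
    _ = _ := by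
      rw [integral_sub_sum_mul_sq hX hD γ]
      simp only [hcross, hsquare, cov_eq_covariance]
      ring

/-- **Proposition 1, first part.** CAM setup: on a probability space, let
`θ ∈ ℝ` be a fixed parameter, `θ̂₀` a square-integrable real random variable, and
`θ̂₀M, θ̂M` square-integrable random vectors in `ℝ^k` such that `θ̂M` is independent of
the pair `(θ̂₀, θ̂₀M)`.  For `γ ∈ ℝ^k` the CAM estimator is
`θ̂_γ := θ̂₀ − γᵀ(θ̂₀M − θ̂M)` and `MSE(θ̂) := E[(θ̂ − θ)²]`.  With
`b(θ̂₀) := E θ̂₀ − θ`, `B := E(θ̂₀M − θ̂M)`, `Ω_j := Cov(θ̂₀, (θ̂₀M)_j)` and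
`Λ := Var(θ̂₀M − θ̂M)`, one has, for every `γ ∈ ℝ^k`:
`MSE(θ̂_γ) − MSE(θ̂₀) = γᵀ(Λ + B Bᵀ)γ − 2 γᵀ(Ω + b(θ̂₀)·B)`. -/
theorem stmt0 {Ωs : Type*} [MeasurableSpace Ωs] (P : Measure Ωs) [IsProbabilityMeasure P]
    (k : ℕ) (θ : ℝ) (θhat0 : Ωs → ℝ) (θhat0M θhatM : Ωs → Fin k → ℝ)
    (hmeas0 : Measurable θhat0) (hmeas0M : Measurable θhat0M) (hmeasM : Measurable θhatM)
    (hL2_0 : MemLp θhat0 2 P)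
    (hL2_0M : ∀ j, MemLp (fun ω => θhat0M ω j) 2 P)
    (hL2_M : ∀ j, MemLp (fun ω => θhatM ω j) 2 P)
    (hindep : IndepFun (fun ω => (θhat0 ω, θhat0M ω)) θhatM P)
    (γ : Fin k → ℝ) :
    (∫ ω, (θhat0 ω - (∑ j, γ j * (θhat0M ω j - θhatM ω j)) - θ) ^ 2 ∂P)
        - (∫ ω, (θhat0 ω - θ) ^ 2 ∂P)
      = (∑ i, ∑ j, γ i *
            (cov P (fun ω => θhat0M ω i - θhatM ω i) (fun ω => θhat0M ω j - θhatM ω j)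
              + (∫ ω, (θhat0M ω i - θhatM ω i) ∂P) * (∫ ω, (θhat0M ω j - θhatM ω j) ∂P))
            * γ j)
        - 2 * ∑ j, γ j *
            (cov P θhat0 (fun ω => θhat0M ω j)
              + ((∫ ω, θhat0 ω ∂P) - θ) * (∫ ω, (θhat0M ω j - θhatM ω j) ∂P)) :=
  stmt0_general P k θ θhat0 θhat0M θhatM hL2_0 hL2_0M hL2_M hindep γ
end

section
/- Lemma (approximation of the conditional kernel expectation). In the conditional kernel setting, for every h > 0, every x ∈ ℝ^d and every z^m ∈ ℝ^{d_m} with f_{X^m}(z^m) > 0, |E[K((X−x)/h) | X^m = z^m] − h^{d−d_m}·K_m((z^m − x^m)/h)·f_{X|X^m}(x^{m^c}; z^m)·μ_{0,m^c}| ≤ (L·h^{1+d−d_m}/f_{X^m}(z^m))·K_m((z^m − x^m)/h)·μ_{1,m^c}, where E[K((X−x)/h) | X^m = z^m] denotes the integral ∫_{ℝ^{d−d_m}} K_m((z^m−x^m)/h)·K_{m^c}((z^{m^c}−x^{m^c})/h)·f_X(z)/f_{X^m}(z^m) dz^{m^c} over the unobserved coordinates z^{m^c} of z (with observed part fixed equal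 to z^m). -/
open MeasureTheory
open scoped NNReal ENNReal BigOperators

/-- The observed coordinates of a missingness pattern `m ∈ {0,1}^d`
(`m j = false` means feature `j` is observed). -/
abbrev Obs (d : ℕ) (m : Fin d → Bool) : Type := {j : Fin d // m j = false}

/-- The unobserved coordinates of a missingness pattern `m`. -/
abbrev Mis (d : ℕ) (m : Fin d → Bool) : Type := {j : Fin d // m j = true}

/-- Restriction of `x ∈ ℝ^d` to the observed coordinates. -/
def projObs {d : ℕ} (m : Fin d → Bool) (x : Fin d → ℝ) : Obs d m → ℝ := fun j => x j.1

/-- Restriction of `x ∈ ℝ^d` to the unobserved coordinates. -/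
def projMis {d : ℕ} (m : Fin d → Bool) (x : Fin d → ℝ) : Mis d m → ℝ := fun j => x j.1

/-- The vector in `ℝ^d` whose observed part is `zo` and unobserved part is `zc`. -/
def combine {d : ℕ} (m : Fin d → Bool) (zo : Obs d m → ℝ) (zc : Mis d m → ℝ) :
    Fin d → ℝ := fun j =>
  if h : m j = false then zo ⟨j, h⟩ else zc ⟨j, by revert h; cases m j <;> simp⟩

/-- **Lemma: approximation of the conditional kernel expectation.**
In the conditional kernel setting (L-Lipschitz density `f_X`, marginal density `f_{X^m}`,
factorising kernel `K(t) = K_m(t^m)·K_{m^c}(t^{m^c})` with `μ_{0,m^c} := ∫K_{m^c} < ∞`,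
`μ_{1,m^c} := ∫‖z‖K_{m^c}(z)dz < ∞`), for every `h > 0`, `x ∈ ℝ^d` and every
`z^m ∈ ℝ^{d_m}` with `f_{X^m}(z^m) > 0`,
`|E[K((X−x)/h) | X^m = z^m] − h^{d−d_m}·K_m((z^m−x^m)/h)·f_{X|X^m}(x^{m^c};z^m)·μ_{0,m^c}|
   ≤ (L·h^{1+d−d_m}/f_{X^m}(z^m))·K_m((z^m−x^m)/h)·μ_{1,m^c}`,
the conditional expectation being the integral over the unobserved coordinates of
`K_m((z^m−x^m)/h)·K_{m^c}((z^{m^c}−x^{m^c})/h)·f_X(z)/f_{X^m}(z^m)` with observed part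
fixed equal to `z^m`. -/
theorem stmt14 {Ωs : Type*} [MeasurableSpace Ωs] (P : Measure Ωs) [IsProbabilityMeasure P]
    (d : ℕ) (hd : 1 ≤ d) (m : Fin d → Bool) (hm : m ≠ fun _ => true)
    (X : Ωs → Fin d → ℝ) (hXmeas : Measurable X)
    (L : ℝ≥0) (fX : (Fin d → ℝ) → ℝ) (hfX0 : ∀ z, 0 ≤ fX z)
    (hfXdens : Measure.map X P = volume.withDensity (fun z => ENNReal.ofReal (fX z)))
    (hfXLip : LipschitzWith L fX)
    (fXm : (Obs d m → ℝ) → ℝ)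
    (hfXm : ∀ zm : Obs d m → ℝ, fXm zm = ∫ zc : Mis d m → ℝ, fX (combine m zm zc))
    (Km : (Obs d m → ℝ) → ℝ) (Kmc : (Mis d m → ℝ) → ℝ)
    (hKm0 : ∀ z, 0 ≤ Km z) (hKmc0 : ∀ z, 0 ≤ Kmc z)
    (hKmmeas : Measurable Km) (hKmcmeas : Measurable Kmc)
    (hKmcint : Integrable Kmc) (hKmcnorm : Integrable (fun z => ‖z‖ * Kmc z))
    (x : Fin d → ℝ) (h : ℝ) (hh : 0 < h)
    (zm : Obs d m → ℝ) (hzm : 0 < fXm zm) :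
    |(∫ zc : Mis d m → ℝ,
          Km (h⁻¹ • (zm - projObs m x)) * Kmc (h⁻¹ • (zc - projMis m x))
            * fX (combine m zm zc) / fXm zm)
        - h ^ (d - Fintype.card (Obs d m)) * Km (h⁻¹ • (zm - projObs m x))
            * (fX (combine m zm (projMis m x)) / fXm zm) * (∫ z, Kmc z)|
      ≤ ((L : ℝ) * h ^ (1 + d - Fintype.card (Obs d m)) / fXm zm)
          * Km (h⁻¹ • (zm - projObs m x)) * ∫ z, ‖z‖ * Kmc z := by
  classical
  set g : (Mis d m → ℝ) → ℝ := fun u => fX (combine m zm u) with hgdef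
  have hgapp : ∀ u, fX (combine m zm u) = g u := fun _ => rfl
  set c : ℝ := Km (h⁻¹ • (zm - projObs m x)) with hcdef
  set p : Mis d m → ℝ := projMis m x with hpdef
  set n : ℕ := Fintype.card (Mis d m) with hndef
  -- cardinalities
  have hcard : Fintype.card (Obs d m) + n = d := by
    have h1 : Fintype.card (Obs d m) = Fintype.card {j : Fin d // ¬ m j = true} :=
      Fintype.card_congr (Equiv.subtypeEquivRight (fun j => by simp))
    have h3 : n = Fintype.card {j : Fin d // m j = true} :=
      Fintype.card_congr (Equiv.refl _)
    rw [h1, h3, Fintype.card_subtype_compl, Fintype.card_fin]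
    refine Nat.sub_add_cancel ?_
    simpa using Fintype.card_subtype_le (fun j : Fin d => m j = true)
  have h2 := Fintype.card_subtype_le (fun j : Fin d => m j = true)
  simp only [Fintype.card_fin] at h2
  have hdn : d - Fintype.card (Obs d m) = n := by omega
  have hdn1 : 1 + d - Fintype.card (Obs d m) = n + 1 := by omega
  -- Lipschitz property of g
  have hcomb : LipschitzWith 1 (fun u : Mis d m → ℝ => combine m zm u) := by
    refine LipschitzWith.of_dist_le_mul fun u v => ?_
    rw [NNReal.coe_one, one_mul]
    refine (dist_pi_le_iff dist_nonneg).2 fun j => ?_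
    by_cases hj : m j = false
    · simp only [combine, dif_pos hj, dist_self]
      exact dist_nonneg
    · simp only [combine, dif_neg hj]
      exact dist_le_pi_dist u v _
  have hgLip : LipschitzWith L g := by
    have := hfXLip.comp hcomb
    rwa [mul_one] at this
  have hgCont : Continuous g := hgLip.continuous
  -- integrability of g
  have hgInt : Integrable g := by
    by_contra hcon
    rw [hfXm zm] at hzm
    simp only [hgapp] at hzm
    rw [integral_undef hcon] at hzm
    exact lt_irrefl 0 hzm
  -- the shifted integrand
  set φ : (Mis d m → ℝ) → ℝ := fun u => Kmc u * g (p + h • u) with hφdef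
  have hdiffle : ∀ u : Mis d m → ℝ,
      ‖Kmc u * (g (p + h • u) - g p)‖ ≤ ‖((L : ℝ) * h) * (‖u‖ * Kmc u)‖ := by
    intro u
    have h1 : |g (p + h • u) - g p| ≤ (L : ℝ) * (h * ‖u‖) := by
      have := hgLip.dist_le_mul (p + h • u) p
      rw [Real.dist_eq] at this
      refine this.trans ?_
      have : dist (p + h • u) p = h * ‖u‖ := by
        rw [dist_eq_norm, add_sub_cancel_left, norm_smul, Real.norm_eq_abs,
          abs_of_pos hh]
      rw [this]
    rw [Real.norm_eq_abs, Real.norm_eq_abs, abs_mul]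
    have h2 : |Kmc u| = Kmc u := abs_of_nonneg (hKmc0 u)
    have h3 : 0 ≤ ((L : ℝ) * h) * (‖u‖ * Kmc u) :=
      mul_nonneg (mul_nonneg L.2 hh.le) (mul_nonneg (norm_nonneg u) (hKmc0 u))
    rw [abs_of_nonneg h3, h2]
    calc Kmc u * |g (p + h • u) - g p| ≤ Kmc u * ((L : ℝ) * (h * ‖u‖)) :=
          mul_le_mul_of_nonneg_left h1 (hKmc0 u)
      _ = (L : ℝ) * h * (‖u‖ * Kmc u) := by ring
  have hdiffmeas : AEStronglyMeasurable (fun u => Kmc u * (g (p + h • u) - g p)) volume :=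
    (hKmcmeas.aestronglyMeasurable).mul
      (((hgCont.comp (continuous_const.add (continuous_id.const_smul h))).sub
        continuous_const).aestronglyMeasurable)
  have hφdiffInt : Integrable (fun u => Kmc u * (g (p + h • u) - g p)) :=
    Integrable.mono (hKmcnorm.const_mul ((L : ℝ) * h)) hdiffmeas
      (Filter.Eventually.of_forall hdiffle)
  have hφInt : Integrable φ := by
    have heq : φ = fun u => Kmc u * (g (p + h • u) - g p) + g p * Kmc u := by
      funext u; simp only [hφdef]; ring
    rw [heq]
    exact hφdiffInt.add (hKmcint.const_mul (g p))
  -- change of variables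
  have hCoV : (∫ zc, Kmc (h⁻¹ • (zc - p)) * g zc) = h ^ n * ∫ u, φ u := by
    have step1 : (∫ zc, Kmc (h⁻¹ • (zc - p)) * g zc)
        = ∫ w, Kmc (h⁻¹ • w) * g (p + w) := by
      rw [← integral_add_left_eq_self (fun zc => Kmc (h⁻¹ • (zc - p)) * g zc) p]
      congr 1
      funext w
      rw [add_sub_cancel_left]
    have step2 : (∫ w, Kmc (h⁻¹ • w) * g (p + w)) = ∫ w, φ (h⁻¹ • w) := by
      congr 1
      funext w
      simp only [hφdef, smul_inv_smul₀ hh.ne']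
    have step3 := Measure.integral_comp_inv_smul_of_nonneg (volume : Measure (Mis d m → ℝ)) φ hh.le
    rw [step1, step2, step3, Module.finrank_pi, smul_eq_mul]
  -- main estimate
  have hest : |(∫ u, φ u) - g p * ∫ z, Kmc z| ≤ (L : ℝ) * h * ∫ z, ‖z‖ * Kmc z := by
    have h1 : (∫ u, φ u) - g p * ∫ z, Kmc z = ∫ u, Kmc u * (g (p + h • u) - g p) := by
      rw [← integral_const_mul (g p) Kmc, ← integral_sub hφInt (hKmcint.const_mul (g p))]
      congr 1
      funext u
      simp only [hφdef]; ring
    rw [h1]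
    have h2 : |∫ u, Kmc u * (g (p + h • u) - g p)|
        ≤ ∫ u, ‖Kmc u * (g (p + h • u) - g p)‖ := by
      rw [← Real.norm_eq_abs]
      exact norm_integral_le_integral_norm _
    refine h2.trans ?_
    have h3 : (∫ u, ‖Kmc u * (g (p + h • u) - g p)‖)
        ≤ ∫ u, ((L : ℝ) * h) * (‖u‖ * Kmc u) := by
      refine integral_mono hφdiffInt.norm (hKmcnorm.const_mul _) fun u => ?_
      refine (hdiffle u).trans (le_of_eq ?_)
      exact abs_of_nonneg (mul_nonneg (mul_nonneg L.2 hh.le)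
        (mul_nonneg (norm_nonneg u) (hKmc0 u)))
    refine h3.trans ?_
    rw [integral_const_mul]
  -- assemble
  simp only [hgapp]
  rw [hdn, hdn1]
  have hLHS : (∫ zc, c * Kmc (h⁻¹ • (zc - p)) * g zc / fXm zm)
      = (c / fXm zm) * ∫ zc, Kmc (h⁻¹ • (zc - p)) * g zc := by
    rw [← integral_const_mul]
    congr 1
    funext zc
    ring
  rw [hLHS, hCoV]
  have key : c / fXm zm * (h ^ n * ∫ u, φ u) - h ^ n * c * (g p / fXm zm) * (∫ z, Kmc z)
      = (c / fXm zm * h ^ n) * ((∫ u, φ u) - g p * ∫ z, Kmc z) := by ring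
  rw [key, abs_mul]
  have hcF : |c / fXm zm * h ^ n| = c / fXm zm * h ^ n :=
    abs_of_nonneg (mul_nonneg (div_nonneg (hKm0 _) hzm.le) (pow_nonneg hh.le n))
  rw [hcF]
  calc c / fXm zm * h ^ n * |(∫ u, φ u) - g p * ∫ z, Kmc z|
      ≤ c / fXm zm * h ^ n * ((L : ℝ) * h * ∫ z, ‖z‖ * Kmc z) :=
        mul_le_mul_of_nonneg_left hest
          (mul_nonneg (div_nonneg (hKm0 _) hzm.le) (pow_nonneg hh.le n))
    _ = (L : ℝ) * h ^ (n + 1) / fXm zm * c * ∫ z, ‖z‖ * Kmc z := by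
        rw [pow_succ]; ring
end

section
/- Lemma (second part): In the conditional kernel setting, suppose additionally that f_{X^m} is L-Lipschitz, that μ_{0,m} := ∫K_m < ∞ and μ_{1,m} := ∫‖z‖K_m(z)dz < ∞, that f_{X^m}(x^m) > 0, and let X₁, X₂, … be i.i.d. copies of X with, for each n, an index set A₀(n) ⊆ {1,…,n} of size n₀ with n₀/n → q₀ ∈ (0,1). Then for every 0 < α < β < 1/d, the remainder R_n(h) := (n₀h^d)^{-1} Σ_{i∈A₀(n)} E[K((X_i − x)/h) | X_i^m] − (μ_{0,m^c}/(n₀h^{d_m})) Σ_{i∈A₀(n)} K_m((X_i^m − x^m)/h)·f_{X|X^m}(x^{m^c}; x^m) is O_p(h) uniformly for h ∈ [n^{−β}, n^{−α}]: for every ε > 0 there exist C > 0 and N such that for all n ≥ N and all h ∈ [n^{−β}, n^{−α}], P(|R_n(h)| > C·h) ≤ ε. -/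
open MeasureTheory Filter ProbabilityTheory Finset
open scoped NNReal ENNReal BigOperators Topology

/-!
Writing `ρ_h` for the summand of `R_n(h)` as a function of `X_i^m`, `R_n(h)` is the average of
the `ρ_h(X_i^m)`, so by Markov's inequality it suffices to show `E|ρ_h(X^m)| = O(h)`. Since
`X^m` has density `f_{X^m}`, this is `∫ f_{X^m} |ρ_h|`, and `f_{X^m}(z) ρ_h(z)` equals
`h^{-d_m} K_m((z - x^m)/h)` times the sum of the normalised smoothing error of `f_X(z, ·)`
by `K_{m^c}` at `x^{m^c}` and of `μ_{0,m^c} (f_X(x)/f_{X^m}(x^m)) (f_{X^m}(x^m) - f_{X^m}(z))`. Both are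
`O(‖z - x^m‖ + h)` by the Lipschitz bounds, and integrating against the rescaled `K_m` turns
`‖z - x^m‖` into `h μ_{1,m}`.
-/

theorem norm_sub_mul_comp_inv_smul_sub {E : Type*} [NormedAddCommGroup E] [NormedSpace ℝ E]
    (K : E → ℝ) (a z : E) {h : ℝ} (hh : 0 < h) :
    ‖z - a‖ * K (h⁻¹ • (z - a)) = h * (‖h⁻¹ • (z - a)‖ * K (h⁻¹ • (z - a))) := by
  rw [norm_smul, Real.norm_of_nonneg (inv_nonneg.2 hh.le), ← mul_assoc, ← mul_assoc,
    mul_inv_cancel₀ hh.ne', one_mul]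

section KernelScaling

variable {E : Type*} [NormedAddCommGroup E] [NormedSpace ℝ E] [MeasurableSpace E] [BorelSpace E]
  [FiniteDimensional ℝ E] (μ : Measure E) [μ.IsAddHaarMeasure]

theorem integrable_comp_inv_smul_sub {K : E → ℝ} (hK : Integrable K μ) (a : E) {h : ℝ}
    (hh : h ≠ 0) : Integrable (fun z => K (h⁻¹ • (z - a))) μ :=
  ((integrable_comp_smul_iff μ K (inv_ne_zero hh)).2 hK).comp_sub_right a

theorem integral_comp_inv_smul_sub (K : E → ℝ) (a : E) {h : ℝ} (hh : 0 ≤ h) :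
    ∫ z, K (h⁻¹ • (z - a)) ∂μ = h ^ Module.finrank ℝ E * ∫ z, K z ∂μ := by
  rw [integral_sub_right_eq_self (fun z => K (h⁻¹ • z)) a,
    Measure.integral_comp_inv_smul_of_nonneg μ K hh, smul_eq_mul]

theorem integrable_norm_sub_mul_comp_inv_smul_sub {K : E → ℝ}
    (hKn : Integrable (fun z => ‖z‖ * K z) μ) (a : E) {h : ℝ} (hh : 0 < h) :
    Integrable (fun z => ‖z - a‖ * K (h⁻¹ • (z - a))) μ := by
  simp_rw [norm_sub_mul_comp_inv_smul_sub K a _ hh]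
  exact (integrable_comp_inv_smul_sub μ hKn a hh.ne').const_mul h

theorem integral_norm_sub_mul_comp_inv_smul_sub (K : E → ℝ) (a : E) {h : ℝ} (hh : 0 < h) :
    ∫ z, ‖z - a‖ * K (h⁻¹ • (z - a)) ∂μ
      = h ^ (Module.finrank ℝ E + 1) * ∫ z, ‖z‖ * K z ∂μ := by
  simp_rw [norm_sub_mul_comp_inv_smul_sub K a _ hh]
  rw [integral_const_mul, integral_comp_inv_smul_sub μ (fun z => ‖z‖ * K z) a hh.le]
  ring

variable {μ}

theorem integrable_kernel_mul_affine_norm {K : E → ℝ} (hK : Integrable K μ)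
    (hKn : Integrable (fun z => ‖z‖ * K z) μ) (a : E) {h : ℝ} (hh : 0 < h) (A B : ℝ) :
    Integrable (fun z => K (h⁻¹ • (z - a)) * (A * ‖z - a‖ + B)) μ := by
  have := ((integrable_norm_sub_mul_comp_inv_smul_sub μ hKn a hh).const_mul A).add
    ((integrable_comp_inv_smul_sub μ hK a hh.ne').const_mul B)
  refine this.congr (Eventually.of_forall fun z => ?_)
  simp only [Pi.add_apply]
  ring

theorem integral_kernel_mul_affine_norm {K : E → ℝ} (hK : Integrable K μ)
    (hKn : Integrable (fun z => ‖z‖ * K z) μ) (a : E) {h : ℝ} (hh : 0 < h) (A B : ℝ) :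
    ∫ z, K (h⁻¹ • (z - a)) * (A * ‖z - a‖ + B) ∂μ
      = h ^ Module.finrank ℝ E * (A * h * ∫ z, ‖z‖ * K z ∂μ + B * ∫ z, K z ∂μ) := by
  have hsplit : (fun z => K (h⁻¹ • (z - a)) * (A * ‖z - a‖ + B))
      = fun z => A * (‖z - a‖ * K (h⁻¹ • (z - a))) + B * K (h⁻¹ • (z - a)) := by
    ext z; ring
  rw [hsplit, integral_add ((integrable_norm_sub_mul_comp_inv_smul_sub μ hKn a hh).const_mul A)
      ((integrable_comp_inv_smul_sub μ hK a hh.ne').const_mul B), integral_const_mul,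
    integral_const_mul, integral_norm_sub_mul_comp_inv_smul_sub μ K a hh,
    integral_comp_inv_smul_sub μ K a hh.le]
  ring

theorem abs_integral_kernel_mul_sub_le {K g : E → ℝ} (hK0 : ∀ z, 0 ≤ K z) (hK : Integrable K μ)
    (hKn : Integrable (fun z => ‖z‖ * K z) μ) (hg : Continuous g) {a : E} {c δ L h : ℝ}
    (hgc : ∀ z, |g z - c| ≤ L * ‖z - a‖ + L * δ) (hh : 0 < h) :
    |∫ z, K (h⁻¹ • (z - a)) * g z ∂μ - h ^ Module.finrank ℝ E * (∫ z, K z ∂μ) * c|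
      ≤ h ^ Module.finrank ℝ E * (L * h * ∫ z, ‖z‖ * K z ∂μ + L * δ * ∫ z, K z ∂μ) := by
  have hKh := integrable_comp_inv_smul_sub μ hK a hh.ne'
  have hbound : ∀ z, ‖K (h⁻¹ • (z - a)) * (g z - c)‖
      ≤ K (h⁻¹ • (z - a)) * (L * ‖z - a‖ + L * δ) := fun z => by
    rw [Real.norm_eq_abs, abs_mul, abs_of_nonneg (hK0 _)]
    exact mul_le_mul_of_nonneg_left (hgc z) (hK0 _)
  have hdom := integrable_kernel_mul_affine_norm hK hKn a hh L (L * δ)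
  have hdiff : Integrable (fun z => K (h⁻¹ • (z - a)) * (g z - c)) μ :=
    hdom.mono' (hKh.aestronglyMeasurable.mul (hg.sub continuous_const).aestronglyMeasurable)
      (Eventually.of_forall hbound)
  have hsub : ∫ z, K (h⁻¹ • (z - a)) * g z ∂μ - h ^ Module.finrank ℝ E * (∫ z, K z ∂μ) * c
      = ∫ z, K (h⁻¹ • (z - a)) * (g z - c) ∂μ := by
    have hmain : Integrable (fun z => K (h⁻¹ • (z - a)) * g z) μ :=
      (hdiff.add (hKh.mul_const c)).congr
        (Eventually.of_forall fun z => by simp only [Pi.add_apply]; ring)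
    rw [← integral_comp_inv_smul_sub μ K a hh.le, ← integral_mul_const,
      ← integral_sub hmain (hKh.mul_const c)]
    simp_rw [mul_sub]
  rw [hsub, ← integral_kernel_mul_affine_norm hK hKn a hh]
  exact norm_integral_le_of_norm_le hdom (Eventually.of_forall hbound)

end KernelScaling

namespace MissingPattern

variable {d : ℕ} (m : Fin d → Bool)

@[simp] theorem projObs_combine (zo : Obs d m → ℝ) (zc : Mis d m → ℝ) :
    projObs m (combine m zo zc) = zo := by
  funext j; simp [projObs, combine, j.2]

@[simp] theorem projMis_combine (zo : Obs d m → ℝ) (zc : Mis d m → ℝ) :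
    projMis m (combine m zo zc) = zc := by
  funext j; simp [projMis, combine, j.2]

@[simp] theorem combine_projObs_projMis (z : Fin d → ℝ) :
    combine m (projObs m z) (projMis m z) = z := by
  funext j; by_cases hj : m j = false <;> simp [combine, projObs, projMis, hj]

theorem combine_sub_combine (zo zo' : Obs d m → ℝ) (zc zc' : Mis d m → ℝ) :
    combine m zo zc - combine m zo' zc' = combine m (zo - zo') (zc - zc') := by
  funext j; by_cases hj : m j = false <;> simp [combine, hj]

theorem norm_combine_le (zo : Obs d m → ℝ) (zc : Mis d m → ℝ) :
    ‖combine m zo zc‖ ≤ ‖zo‖ + ‖zc‖ := by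
  refine (pi_norm_le_iff_of_nonneg (by positivity)).2 fun j => ?_
  by_cases hj : m j = false
  · simpa [combine, hj] using
      (norm_le_pi_norm zo ⟨j, hj⟩).trans (le_add_of_nonneg_right (norm_nonneg zc))
  · have hj' : m j = true := by simpa using hj
    simpa [combine, hj] using
      (norm_le_pi_norm zc ⟨j, hj'⟩).trans (le_add_of_nonneg_left (norm_nonneg zo))

theorem continuous_combine :
    Continuous fun p : (Obs d m → ℝ) × (Mis d m → ℝ) => combine m p.1 p.2 := by
  refine continuous_pi fun j => ?_
  by_cases hj : m j = false
  · simp only [combine, hj, dite_true]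
    fun_prop
  · simp only [combine, dif_neg hj]
    fun_prop

theorem card_obs_add_card_mis : Fintype.card (Obs d m) + Fintype.card (Mis d m) = d := by
  have hmis : Fintype.card (Mis d m) = Fintype.card {j : Fin d // ¬ m j = false} :=
    Fintype.card_congr (Equiv.subtypeEquivRight fun j => by simp)
  have hle : Fintype.card (Obs d m) ≤ d :=
    (Fintype.card_subtype_le _).trans_eq (Fintype.card_fin d)
  rw [hmis, Fintype.card_subtype_compl, Fintype.card_fin]
  exact Nat.add_sub_of_le hle

def splitCoords : (Fin d → ℝ) ≃ᵐ (Obs d m → ℝ) × (Mis d m → ℝ) :=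
  (MeasurableEquiv.piEquivPiSubtypeProd (fun _ => ℝ) fun j => m j = false).trans
    ((MeasurableEquiv.refl _).prodCongr
      (MeasurableEquiv.piCongrLeft (fun _ => ℝ) (Equiv.subtypeEquivRight fun j => by simp)))

theorem splitCoords_apply (z : Fin d → ℝ) : splitCoords m z = (projObs m z, projMis m z) := by
  ext j
  · rfl
  · simp [splitCoords, projMis]
    rfl

theorem splitCoords_symm_apply (p : (Obs d m → ℝ) × (Mis d m → ℝ)) :
    (splitCoords m).symm p = combine m p.1 p.2 := by
  rw [MeasurableEquiv.symm_apply_eq, splitCoords_apply, projObs_combine, projMis_combine]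

theorem measurePreserving_splitCoords :
    MeasurePreserving (splitCoords m) volume (volume.prod volume) :=
  ((MeasurePreserving.id volume).prod
    (volume_measurePreserving_piCongrLeft (fun _ => ℝ) _)).comp
    (volume_preserving_piEquivPiSubtypeProd (fun _ => ℝ) _)

theorem measurable_projObs : Measurable (projObs m) :=
  measurable_pi_lambda _ fun _ => measurable_pi_apply _

theorem lintegral_eq_lintegral_combine {F : (Fin d → ℝ) → ℝ≥0∞} (hF : Measurable F) :
    ∫⁻ z, F z = ∫⁻ zo, ∫⁻ zc, F (combine m zo zc) := by
  rw [← ((measurePreserving_splitCoords m).symm _).lintegral_comp_emb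
      (MeasurableEquiv.measurableEmbedding _)]
  simp only [splitCoords_symm_apply]
  exact lintegral_prod (fun p => F (combine m p.1 p.2))
    (hF.comp (continuous_combine m).measurable).aemeasurable

theorem lintegral_ofReal_mul_comp_projObs {f : (Fin d → ℝ) → ℝ} (hf0 : ∀ z, 0 ≤ f z)
    (hf : Measurable f) (hfin : ∫⁻ z, ENNReal.ofReal (f z) ≠ ∞)
    {G : (Obs d m → ℝ) → ℝ≥0∞} (hG : Measurable G) :
    ∫⁻ z, ENNReal.ofReal (f z) * G (projObs m z)
      = ∫⁻ zo, ENNReal.ofReal (∫ zc, f (combine m zo zc)) * G zo := by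
  have hslice : ∀ zo, Measurable fun zc => f (combine m zo zc) := fun zo =>
    hf.comp ((continuous_combine m).comp (Continuous.prodMk_right zo)).measurable
  rw [lintegral_eq_lintegral_combine m hf.ennreal_ofReal] at hfin
  have hae : ∀ᵐ zo, ∫⁻ zc, ENNReal.ofReal (f (combine m zo zc))
      = ENNReal.ofReal (∫ zc, f (combine m zo zc)) := by
    filter_upwards [ae_lt_top' (Measurable.lintegral_prod_right' (f := fun p =>
      ENNReal.ofReal (f (combine m p.1 p.2)))
      (hf.comp (continuous_combine m).measurable).ennreal_ofReal).aemeasurable hfin] with zo hzo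
    rw [ofReal_integral_eq_lintegral_ofReal _ (Eventually.of_forall fun _ => hf0 _)]
    exact ⟨(hslice zo).aestronglyMeasurable,
      (hasFiniteIntegral_iff_ofReal (Eventually.of_forall fun _ => hf0 _)).2 hzo⟩
  rw [lintegral_eq_lintegral_combine m (F := fun z => ENNReal.ofReal (f z) * G (projObs m z))
    (hf.ennreal_ofReal.mul (hG.comp (measurable_projObs m)))]
  refine lintegral_congr_ae (hae.mono fun zo hzo => ?_)
  simp only [projObs_combine]
  rw [lintegral_mul_const _ (hslice zo).ennreal_ofReal, hzo]

theorem lintegral_comp_projObs_of_map_eq_withDensity {Ω : Type*} [MeasurableSpace Ω]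
    {P : Measure Ω} [IsFiniteMeasure P] {Y : Ω → Fin d → ℝ} (hY : Measurable Y)
    {f : (Fin d → ℝ) → ℝ} (hf0 : ∀ z, 0 ≤ f z) (hf : Measurable f)
    (hYf : P.map Y = volume.withDensity fun z => ENNReal.ofReal (f z))
    {G : (Obs d m → ℝ) → ℝ≥0∞} (hG : Measurable G) :
    ∫⁻ ω, G (projObs m (Y ω)) ∂P = ∫⁻ zo, ENNReal.ofReal (∫ zc, f (combine m zo zc)) * G zo := by
  have hfin : ∫⁻ z, ENNReal.ofReal (f z) ≠ ∞ := by
    simpa [hYf] using measure_ne_top (P.map Y) Set.univ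
  have hGo : Measurable fun z => G (projObs m z) := hG.comp (measurable_projObs m)
  rw [← lintegral_map hGo hY, hYf, lintegral_withDensity_eq_lintegral_mul _ hf.ennreal_ofReal hGo]
  exact lintegral_ofReal_mul_comp_projObs m hf0 hf hfin hG

end MissingPattern

theorem measure_lt_abs_average_le {Ω ι : Type*} [MeasurableSpace Ω] (P : Measure Ω)
    (A : Finset ι) {g : ι → Ω → ℝ} (hg : ∀ i, Measurable (g i)) {B : ℝ≥0∞}
    (hB : ∀ i ∈ A, ∫⁻ ω, ENNReal.ofReal |g i ω| ∂P ≤ B) {t : ℝ} (ht : 0 < t) :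
    P {ω | t < |(#A : ℝ)⁻¹ * ∑ i ∈ A, g i ω|} ≤ B / ENNReal.ofReal t := by
  have habs : ∀ ω, |(#A : ℝ)⁻¹ * ∑ i ∈ A, g i ω|
      ≤ (#A : ℝ)⁻¹ * ∑ i ∈ A, |g i ω| := fun ω => by
    rw [abs_mul, abs_of_nonneg (by positivity)]
    exact mul_le_mul_of_nonneg_left (abs_sum_le_sum_abs _ _) (by positivity)
  have hofReal : ∀ ω, ENNReal.ofReal ((#A : ℝ)⁻¹ * ∑ i ∈ A, |g i ω|)
      = (#A : ℝ≥0∞)⁻¹ * ∑ i ∈ A, ENNReal.ofReal |g i ω| := fun ω => by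
    rw [ENNReal.ofReal_mul (by positivity), ENNReal.ofReal_sum_of_nonneg fun _ _ => abs_nonneg _]
    rcases A.eq_empty_or_nonempty with rfl | hA
    · simp
    · rw [ENNReal.ofReal_inv_of_pos (by simpa using hA), ENNReal.ofReal_natCast]
  have hmeas : Measurable fun ω => (#A : ℝ≥0∞)⁻¹ * ∑ i ∈ A, ENNReal.ofReal |g i ω| :=
    (Finset.measurable_sum _ fun i _ => ((hg i).abs).ennreal_ofReal).const_mul _
  calc P {ω | t < |(#A : ℝ)⁻¹ * ∑ i ∈ A, g i ω|}
      ≤ P {ω | ENNReal.ofReal t ≤ (#A : ℝ≥0∞)⁻¹ * ∑ i ∈ A, ENNReal.ofReal |g i ω|} :=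
        measure_mono fun ω hω => by
          rw [Set.mem_ofPred_eq, ← hofReal]
          exact ENNReal.ofReal_le_ofReal (hω.le.trans (habs ω))
    _ ≤ (∫⁻ ω, (#A : ℝ≥0∞)⁻¹ * ∑ i ∈ A, ENNReal.ofReal |g i ω| ∂P) / ENNReal.ofReal t :=
        meas_ge_le_lintegral_div hmeas.aemeasurable (by simpa using ht) ENNReal.ofReal_ne_top
    _ ≤ B / ENNReal.ofReal t := by
        gcongr
        rw [lintegral_const_mul _ (Finset.measurable_sum _ fun i _ => ((hg i).abs).ennreal_ofReal),
          lintegral_finsetSum _ fun i _ => ((hg i).abs).ennreal_ofReal]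
        calc (#A : ℝ≥0∞)⁻¹ * ∑ i ∈ A, ∫⁻ ω, ENNReal.ofReal |g i ω| ∂P
            ≤ (#A : ℝ≥0∞)⁻¹ * (#A * B) := by
              gcongr
              simpa using Finset.sum_le_sum hB
          _ ≤ B := by
              rcases A.eq_empty_or_nonempty with rfl | hA
              · simp
              · rw [ENNReal.inv_mul_cancel_left (by simpa using hA.ne_empty) (by simp)]

/-- `R_n(h)` is the average over `i ∈ A₀(n)` of this function evaluated at `X_i^m`. -/
noncomputable def remainderTerm {d : ℕ} (m : Fin d → Bool) (fX : (Fin d → ℝ) → ℝ)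
    (fXm Km : (Obs d m → ℝ) → ℝ) (Kmc : (Mis d m → ℝ) → ℝ) (x : Fin d → ℝ) (h : ℝ)
    (zo : Obs d m → ℝ) : ℝ :=
  (∫ zc, Km (h⁻¹ • (zo - projObs m x)) * Kmc (h⁻¹ • (zc - projMis m x))
      * fX (combine m zo zc) / fXm zo) / h ^ d
    - (∫ z, Kmc z) / h ^ Fintype.card (Obs d m)
      * (Km (h⁻¹ • (zo - projObs m x)) * (fX x / fXm (projObs m x)))

section Remainder

open MissingPattern

variable {d : ℕ} {m : Fin d → Bool} {fX : (Fin d → ℝ) → ℝ} {fXm Km : (Obs d m → ℝ) → ℝ}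
  {Kmc : (Mis d m → ℝ) → ℝ} {x : Fin d → ℝ} {L : ℝ≥0} {h : ℝ}

theorem abs_integral_kernel_mul_fX_sub_le (hfX : LipschitzWith L fX) (hKmc0 : ∀ z, 0 ≤ Kmc z)
    (hKmc : Integrable Kmc) (hKmcn : Integrable fun z => ‖z‖ * Kmc z) (hh : 0 < h)
    (zo : Obs d m → ℝ) :
    |(∫ zc, Kmc (h⁻¹ • (zc - projMis m x)) * fX (combine m zo zc))
        - h ^ Fintype.card (Mis d m) * (∫ z, Kmc z) * fX x|
      ≤ h ^ Fintype.card (Mis d m) * (L * h * (∫ z, ‖z‖ * Kmc z)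
          + L * ‖zo - projObs m x‖ * ∫ z, Kmc z) := by
  have hg : Continuous fun zc => fX (combine m zo zc) :=
    hfX.continuous.comp ((continuous_combine m).comp (Continuous.prodMk_right zo))
  have hgx : ∀ zc, |fX (combine m zo zc) - fX x|
      ≤ L * ‖zc - projMis m x‖ + L * ‖zo - projObs m x‖ := by
    intro zc
    calc |fX (combine m zo zc) - fX x|
        ≤ L * ‖combine m zo zc - combine m (projObs m x) (projMis m x)‖ := by
          rw [combine_projObs_projMis, ← Real.dist_eq, ← dist_eq_norm]
          exact hfX.dist_le_mul _ _
      _ ≤ L * ‖zc - projMis m x‖ + L * ‖zo - projObs m x‖ := by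
          rw [combine_sub_combine, add_comm, ← mul_add]
          exact mul_le_mul_of_nonneg_left (norm_combine_le m _ _) L.coe_nonneg
  have := abs_integral_kernel_mul_sub_le (μ := volume) hKmc0 hKmc hKmcn hg hgx hh
  rwa [Module.finrank_fintype_fun_eq_card] at this

theorem mul_remainderTerm_eq (hx : fXm (projObs m x) ≠ 0) (hh : h ≠ 0) {zo : Obs d m → ℝ}
    (hzo : fXm zo ≠ 0) :
    fXm zo * remainderTerm m fX fXm Km Kmc x h zo
      = Km (h⁻¹ • (zo - projObs m x)) / h ^ Fintype.card (Obs d m)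
        * (((∫ zc, Kmc (h⁻¹ • (zc - projMis m x)) * fX (combine m zo zc))
              - h ^ Fintype.card (Mis d m) * (∫ z, Kmc z) * fX x) / h ^ Fintype.card (Mis d m)
          + (∫ z, Kmc z) * (fX x / fXm (projObs m x)) * (fXm (projObs m x) - fXm zo)) := by
  have hpow : h ^ d = h ^ Fintype.card (Obs d m) * h ^ Fintype.card (Mis d m) := by
    rw [← pow_add, card_obs_add_card_mis]
  have hint : ∫ zc, Km (h⁻¹ • (zo - projObs m x)) * Kmc (h⁻¹ • (zc - projMis m x))
        * fX (combine m zo zc) / fXm zo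
      = Km (h⁻¹ • (zo - projObs m x)) / fXm zo
        * ∫ zc, Kmc (h⁻¹ • (zc - projMis m x)) * fX (combine m zo zc) := by
    rw [← integral_const_mul]
    congr 1
    ext zc
    ring
  rw [remainderTerm, hint, hpow]
  field_simp
  ring

theorem mul_abs_remainderTerm_le (hfX : LipschitzWith L fX) (hfXm : LipschitzWith L fXm)
    (hfXx : 0 ≤ fX x) (hKm0 : ∀ z, 0 ≤ Km z) (hKmc0 : ∀ z, 0 ≤ Kmc z) (hKmc : Integrable Kmc)
    (hKmcn : Integrable fun z => ‖z‖ * Kmc z) (hx : 0 < fXm (projObs m x)) (hh : 0 < h)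
    {zo : Obs d m → ℝ} (hzo : 0 ≤ fXm zo) :
    fXm zo * |remainderTerm m fX fXm Km Kmc x h zo|
      ≤ Km (h⁻¹ • (zo - projObs m x))
        * (L * (∫ z, Kmc z) * (1 + fX x / fXm (projObs m x)) / h ^ Fintype.card (Obs d m)
            * ‖zo - projObs m x‖
          + L * h * (∫ z, ‖z‖ * Kmc z) / h ^ Fintype.card (Obs d m)) := by
  have hμ0 : 0 ≤ ∫ z, Kmc z := integral_nonneg hKmc0
  have hμ1 : 0 ≤ ∫ z, ‖z‖ * Kmc z :=
    integral_nonneg fun z => mul_nonneg (norm_nonneg z) (hKmc0 z)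
  have hc0 : 0 ≤ fX x / fXm (projObs m x) := div_nonneg hfXx hx.le
  have hk : 0 ≤ Km (h⁻¹ • (zo - projObs m x)) := hKm0 _
  rcases hzo.eq_or_lt with hzero | hpos
  · rw [← hzero, zero_mul]
    positivity
  set Hc := h ^ Fintype.card (Mis d m)
  have hHc : 0 < Hc := pow_pos hh _
  have hsmooth : |((∫ zc, Kmc (h⁻¹ • (zc - projMis m x)) * fX (combine m zo zc))
        - Hc * (∫ z, Kmc z) * fX x) / Hc|
      ≤ L * h * (∫ z, ‖z‖ * Kmc z) + L * ‖zo - projObs m x‖ * ∫ z, Kmc z := by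
    rw [abs_div, abs_of_pos hHc, div_le_iff₀ hHc, mul_comm _ Hc]
    exact abs_integral_kernel_mul_fX_sub_le hfX hKmc0 hKmc hKmcn hh zo
  have hmarg : |(∫ z, Kmc z) * (fX x / fXm (projObs m x)) * (fXm (projObs m x) - fXm zo)|
      ≤ (∫ z, Kmc z) * (fX x / fXm (projObs m x)) * (L * ‖zo - projObs m x‖) := by
    rw [abs_mul, abs_of_nonneg (by positivity), ← Real.dist_eq, dist_comm, dist_eq_norm]
    exact mul_le_mul_of_nonneg_left (hfXm.dist_le_mul _ _) (by positivity)
  rw [← abs_of_pos hpos, ← abs_mul, mul_remainderTerm_eq hx.ne' hh.ne' hpos.ne', abs_mul,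
    abs_of_nonneg (by positivity)]
  calc _ ≤ Km (h⁻¹ • (zo - projObs m x)) / h ^ Fintype.card (Obs d m)
        * ((L * h * (∫ z, ‖z‖ * Kmc z) + L * ‖zo - projObs m x‖ * ∫ z, Kmc z)
          + (∫ z, Kmc z) * (fX x / fXm (projObs m x)) * (L * ‖zo - projObs m x‖)) :=
        mul_le_mul_of_nonneg_left ((abs_add_le _ _).trans (add_le_add hsmooth hmarg))
          (by positivity)
    _ = _ := by ring

theorem lintegral_mul_abs_remainderTerm_le (hfX : LipschitzWith L fX)
    (hfXm : LipschitzWith L fXm) (hfXx : 0 ≤ fX x) (hfXm0 : ∀ zo, 0 ≤ fXm zo)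
    (hKm0 : ∀ z, 0 ≤ Km z) (hKm : Integrable Km) (hKmn : Integrable fun z => ‖z‖ * Km z)
    (hKmc0 : ∀ z, 0 ≤ Kmc z) (hKmc : Integrable Kmc) (hKmcn : Integrable fun z => ‖z‖ * Kmc z)
    (hx : 0 < fXm (projObs m x)) (hh : 0 < h) :
    ∫⁻ zo, ENNReal.ofReal (fXm zo) * ENNReal.ofReal |remainderTerm m fX fXm Km Kmc x h zo|
      ≤ ENNReal.ofReal (h * (L * ((∫ z, Kmc z) * (1 + fX x / fXm (projObs m x))
          * (∫ z, ‖z‖ * Km z) + (∫ z, ‖z‖ * Kmc z) * ∫ z, Km z))) := by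
  have hμ0 : 0 ≤ ∫ z, Kmc z := integral_nonneg hKmc0
  have hμ1 : 0 ≤ ∫ z, ‖z‖ * Kmc z :=
    integral_nonneg fun z => mul_nonneg (norm_nonneg z) (hKmc0 z)
  have hc0 : 0 ≤ fX x / fXm (projObs m x) := div_nonneg hfXx hx.le
  have hHm : 0 < h ^ Fintype.card (Obs d m) := pow_pos hh _
  set A := L * (∫ z, Kmc z) * (1 + fX x / fXm (projObs m x)) / h ^ Fintype.card (Obs d m)
  set B := L * h * (∫ z, ‖z‖ * Kmc z) / h ^ Fintype.card (Obs d m)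
  have hA : 0 ≤ A := by positivity
  have hB : 0 ≤ B := by positivity
  calc ∫⁻ zo, ENNReal.ofReal (fXm zo) * ENNReal.ofReal |remainderTerm m fX fXm Km Kmc x h zo|
      ≤ ∫⁻ zo, ENNReal.ofReal (Km (h⁻¹ • (zo - projObs m x)) * (A * ‖zo - projObs m x‖ + B)) :=
        lintegral_mono fun zo => by
          rw [← ENNReal.ofReal_mul (hfXm0 zo)]
          exact ENNReal.ofReal_le_ofReal (mul_abs_remainderTerm_le hfX hfXm hfXx hKm0 hKmc0 hKmc
            hKmcn hx hh (hfXm0 zo))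
    _ = ENNReal.ofReal (∫ zo, Km (h⁻¹ • (zo - projObs m x)) * (A * ‖zo - projObs m x‖ + B)) :=
        (ofReal_integral_eq_lintegral_ofReal (integrable_kernel_mul_affine_norm hKm hKmn _ hh _ _)
          (Eventually.of_forall fun zo => mul_nonneg (hKm0 _) (by positivity))).symm
    _ = _ := by
        rw [integral_kernel_mul_affine_norm hKm hKmn _ hh, Module.finrank_fintype_fun_eq_card]
        congr 1
        simp only [A, B]
        field_simp

theorem measurable_remainderTerm (hfX : Measurable fX) (hfXm : Measurable fXm)
    (hKm : Measurable Km) (hKmc : Measurable Kmc) :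
    Measurable (remainderTerm m fX fXm Km Kmc x h) := by
  have hKmh : Measurable fun zo : Obs d m → ℝ => Km (h⁻¹ • (zo - projObs m x)) :=
    hKm.comp (by fun_prop)
  have hinner : Measurable fun p : (Obs d m → ℝ) × (Mis d m → ℝ) =>
      Km (h⁻¹ • (p.1 - projObs m x)) * Kmc (h⁻¹ • (p.2 - projMis m x))
        * fX (combine m p.1 p.2) / fXm p.1 :=
    (((hKmh.comp measurable_fst).mul (hKmc.comp (by fun_prop))).mul
      (hfX.comp (continuous_combine m).measurable)).div (hfXm.comp measurable_fst)
  exact (hinner.stronglyMeasurable.integral_prod_right'.measurable.div_const _).sub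
    ((hKmh.mul_const _).const_mul _)

end Remainder

theorem stmt15_general {Ωs : Type*} [MeasurableSpace Ωs] (P : Measure Ωs) [IsProbabilityMeasure P]
    (d : ℕ) (m : Fin d → Bool)
    (X : ℕ → Ωs → Fin d → ℝ) (hXmeas : ∀ i, Measurable (X i))
    (hXident : ∀ i, IdentDistrib (X i) (X 0) P P)
    (L : ℝ≥0) (fX : (Fin d → ℝ) → ℝ) (hfX0 : ∀ z, 0 ≤ fX z)
    (hfXdens : Measure.map (X 0) P = volume.withDensity (fun z => ENNReal.ofReal (fX z)))
    (hfXLip : LipschitzWith L fX)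
    (fXm : (Obs d m → ℝ) → ℝ)
    (hfXm : ∀ zm : Obs d m → ℝ, fXm zm = ∫ zc : Mis d m → ℝ, fX (combine m zm zc))
    (hfXmLip : LipschitzWith L fXm)
    (Km : (Obs d m → ℝ) → ℝ) (Kmc : (Mis d m → ℝ) → ℝ)
    (hKm0 : ∀ z, 0 ≤ Km z) (hKmc0 : ∀ z, 0 ≤ Kmc z)
    (hKmmeas : Measurable Km) (hKmcmeas : Measurable Kmc)
    (hKmint : Integrable Km) (hKmnorm : Integrable (fun z => ‖z‖ * Km z))
    (hKmcint : Integrable Kmc) (hKmcnorm : Integrable (fun z => ‖z‖ * Kmc z))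
    (x : Fin d → ℝ) (hx : 0 < fXm (projObs m x))
    (A0 : ℕ → Finset ℕ)
    (n0 : ℕ → ℕ) (hn0card : ∀ n, (A0 n).card = n0 n)
    (R : ℕ → ℝ → Ωs → ℝ)
    (hR : R = fun n h ω =>
      (∑ i ∈ A0 n, ∫ zc : Mis d m → ℝ,
          Km (h⁻¹ • (projObs m (X i ω) - projObs m x)) * Kmc (h⁻¹ • (zc - projMis m x))
            * fX (combine m (projObs m (X i ω)) zc) / fXm (projObs m (X i ω)))
        / (n0 n * h ^ d)
      - ((∫ z, Kmc z) / (n0 n * h ^ (Fintype.card (Obs d m))))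
          * ∑ i ∈ A0 n, Km (h⁻¹ • (projObs m (X i ω) - projObs m x))
              * (fX x / fXm (projObs m x))) :
    ∀ α β : ℝ, 0 < α → α < β → β < 1 / d →
      ∀ ε : ℝ, 0 < ε → ∃ C : ℝ, 0 < C ∧ ∃ N : ℕ, ∀ n ≥ N,
        ∀ h ∈ Set.Icc ((n : ℝ) ^ (-β)) ((n : ℝ) ^ (-α)),
          P {ω | C * h < |R n h ω|} ≤ ENNReal.ofReal ε := by
  intro α β _ _ _ ε hε
  set M := (L : ℝ) * ((∫ z, Kmc z) * (1 + fX x / fXm (projObs m x)) * (∫ z, ‖z‖ * Km z)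
    + (∫ z, ‖z‖ * Kmc z) * ∫ z, Km z)
  have hM : 0 ≤ M := by
    have : 0 ≤ ∫ z, Km z := integral_nonneg hKm0
    have : 0 ≤ ∫ z, Kmc z := integral_nonneg hKmc0
    have : 0 ≤ ∫ z, ‖z‖ * Km z := integral_nonneg fun z => mul_nonneg (norm_nonneg z) (hKm0 z)
    have : 0 ≤ ∫ z, ‖z‖ * Kmc z :=
      integral_nonneg fun z => mul_nonneg (norm_nonneg z) (hKmc0 z)
    have := div_nonneg (hfX0 x) hx.le
    positivity
  refine ⟨M / ε + 1, by positivity, 1, fun n hn h hh => ?_⟩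
  have hh0 : 0 < h := (Real.rpow_pos_of_pos (by exact_mod_cast hn) _).trans_le hh.1
  set ρ := remainderTerm m fX fXm Km Kmc x h
  have hρ : Measurable ρ := measurable_remainderTerm hfXLip.continuous.measurable
    hfXmLip.continuous.measurable hKmmeas hKmcmeas
  have hR_avg : ∀ ω, R n h ω = (#(A0 n) : ℝ)⁻¹ * ∑ i ∈ A0 n, ρ (projObs m (X i ω)) := by
    intro ω
    simp only [hR, ρ, remainderTerm, hn0card]
    rw [sum_sub_distrib, ← sum_div, ← mul_sum]
    ring
  have hmoment : ∀ i ∈ A0 n, ∫⁻ ω, ENNReal.ofReal |ρ (projObs m (X i ω))| ∂P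
      ≤ ENNReal.ofReal (h * M) := by
    intro i _
    rw [MissingPattern.lintegral_comp_projObs_of_map_eq_withDensity m (hXmeas i) hfX0
      hfXLip.continuous.measurable ((hXident i).map_eq.trans hfXdens) hρ.abs.ennreal_ofReal]
    simp_rw [← hfXm]
    exact lintegral_mul_abs_remainderTerm_le hfXLip hfXmLip (hfX0 x)
      (fun zo => (hfXm zo).symm ▸ integral_nonneg fun _ => hfX0 _) hKm0 hKmint hKmnorm hKmc0
      hKmcint hKmcnorm hx hh0
  calc P {ω | (M / ε + 1) * h < |R n h ω|}
      = P {ω | (M / ε + 1) * h < |(#(A0 n) : ℝ)⁻¹ * ∑ i ∈ A0 n, ρ (projObs m (X i ω))|} := by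
        simp_rw [hR_avg]
    _ ≤ ENNReal.ofReal (h * M) / ENNReal.ofReal ((M / ε + 1) * h) :=
        measure_lt_abs_average_le P (A0 n)
          (fun i => hρ.comp ((MissingPattern.measurable_projObs m).comp (hXmeas i))) hmoment
          (by positivity)
    _ ≤ ENNReal.ofReal ε := by
        rw [← ENNReal.ofReal_div_of_pos (by positivity)]
        refine ENNReal.ofReal_le_ofReal ((div_le_iff₀ (by positivity)).2 ?_)
        have : ε * ((M / ε + 1) * h) = h * M + ε * h := by field_simp
        nlinarith [mul_pos hε hh0]

/-- **Lemma, second part.** In the conditional kernel setting, with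
`f_{X^m}` also `L`-Lipschitz, `μ_{0,m}, μ_{1,m} < ∞`, `f_{X^m}(x^m) > 0`, and i.i.d.
copies `X₁, X₂, …` of `X` with index sets `A₀(n)` of size `n₀(n)`, `n₀(n)/n → q₀ ∈ (0,1)`,
the remainder
`R_n(h) := (n₀h^d)⁻¹ Σ_{i∈A₀(n)} E[K((X_i − x)/h) | X_i^m]
   − (μ_{0,m^c}/(n₀h^{d_m})) Σ_{i∈A₀(n)} K_m((X_i^m − x^m)/h)·f_{X|X^m}(x^{m^c}; x^m)`
is `O_p(h)` uniformly for `h ∈ [n^{−β}, n^{−α}]` whenever `0 < α < β < 1/d`: for every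
`ε > 0` there exist `C > 0` and `N` such that for all `n ≥ N` and all such `h`,
`P(|R_n(h)| > C·h) ≤ ε`. -/
theorem stmt15 {Ωs : Type*} [MeasurableSpace Ωs] (P : Measure Ωs) [IsProbabilityMeasure P]
    (d : ℕ) (hd : 1 ≤ d) (m : Fin d → Bool) (hm : m ≠ fun _ => true)
    (X : ℕ → Ωs → Fin d → ℝ) (hXmeas : ∀ i, Measurable (X i))
    (hXindep : iIndepFun X P)
    (hXident : ∀ i, IdentDistrib (X i) (X 0) P P)
    (L : ℝ≥0) (fX : (Fin d → ℝ) → ℝ) (hfX0 : ∀ z, 0 ≤ fX z)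
    (hfXdens : Measure.map (X 0) P = volume.withDensity (fun z => ENNReal.ofReal (fX z)))
    (hfXLip : LipschitzWith L fX)
    (fXm : (Obs d m → ℝ) → ℝ)
    (hfXm : ∀ zm : Obs d m → ℝ, fXm zm = ∫ zc : Mis d m → ℝ, fX (combine m zm zc))
    (hfXmLip : LipschitzWith L fXm)
    (Km : (Obs d m → ℝ) → ℝ) (Kmc : (Mis d m → ℝ) → ℝ)
    (hKm0 : ∀ z, 0 ≤ Km z) (hKmc0 : ∀ z, 0 ≤ Kmc z)
    (hKmmeas : Measurable Km) (hKmcmeas : Measurable Kmc)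
    (hKmint : Integrable Km) (hKmnorm : Integrable (fun z => ‖z‖ * Km z))
    (hKmcint : Integrable Kmc) (hKmcnorm : Integrable (fun z => ‖z‖ * Kmc z))
    (x : Fin d → ℝ) (hx : 0 < fXm (projObs m x))
    (A0 : ℕ → Finset ℕ) (hA0sub : ∀ n, A0 n ⊆ Finset.range n)
    (n0 : ℕ → ℕ) (hn0card : ∀ n, (A0 n).card = n0 n)
    (q0 : ℝ) (hq0 : q0 ∈ Set.Ioo (0 : ℝ) 1)
    (hq0lim : Tendsto (fun n => (n0 n : ℝ) / n) atTop (𝓝 q0))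
    (R : ℕ → ℝ → Ωs → ℝ)
    (hR : R = fun n h ω =>
      (∑ i ∈ A0 n, ∫ zc : Mis d m → ℝ,
          Km (h⁻¹ • (projObs m (X i ω) - projObs m x)) * Kmc (h⁻¹ • (zc - projMis m x))
            * fX (combine m (projObs m (X i ω)) zc) / fXm (projObs m (X i ω)))
        / (n0 n * h ^ d)
      - ((∫ z, Kmc z) / (n0 n * h ^ (Fintype.card (Obs d m))))
          * ∑ i ∈ A0 n, Km (h⁻¹ • (projObs m (X i ω) - projObs m x))
              * (fX x / fXm (projObs m x))) :
    ∀ α β : ℝ, 0 < α → α < β → β < 1 / d →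
      ∀ ε : ℝ, 0 < ε → ∃ C : ℝ, 0 < C ∧ ∃ N : ℕ, ∀ n ≥ N,
        ∀ h ∈ Set.Icc ((n : ℝ) ^ (-β)) ((n : ℝ) ^ (-α)),
          P {ω | C * h < |R n h ω|} ≤ ENNReal.ofReal ε :=
  stmt15_general P d m X hXmeas hXident L fX hfX0 hfXdens hfXLip fXm hfXm hfXmLip Km Kmc hKm0 hKmc0
    hKmmeas hKmcmeas hKmint hKmnorm hKmcint hKmcnorm x hx A0 n0 hn0card R hR
end

section
/- For every x ∈ ℝ^k and every h > 0, |∫_{ℝ^k} K((z − x)/h)·f(z) dz − h^k·f(x)·μ₀| ≤ L·h^{k+1}·μ₁. -/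
open MeasureTheory
open scoped NNReal ENNReal

/-- Let `k ≥ 1`, let `f : ℝ^k → [0,∞)` be an integrable, `L`-Lipschitz
function, and let `K : ℝ^k → [0,∞)` be measurable with `μ₀ := ∫ K < ∞` and
`μ₁ := ∫ ‖z‖·K(z) dz < ∞` (finiteness being expressed by integrability).  Then for every
`x ∈ ℝ^k` and every `h > 0`,
`|∫ K((z − x)/h)·f(z) dz − h^k·f(x)·μ₀| ≤ L·h^(k+1)·μ₁`. -/
theorem stmt17 (k : ℕ) (hk : 1 ≤ k) (L : ℝ≥0)
    (f : EuclideanSpace ℝ (Fin k) → ℝ) (hf0 : ∀ z, 0 ≤ f z)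
    (hfint : Integrable f) (hfLip : LipschitzWith L f)
    (K : EuclideanSpace ℝ (Fin k) → ℝ) (hKmeas : Measurable K) (hK0 : ∀ z, 0 ≤ K z)
    (hKint : Integrable K) (hKnorm : Integrable (fun z => ‖z‖ * K z))
    (x : EuclideanSpace ℝ (Fin k)) (h : ℝ) (hh : 0 < h) :
    |(∫ z, K (h⁻¹ • (z - x)) * f z) - h ^ k * f x * (∫ z, K z)|
      ≤ (L : ℝ) * h ^ (k + 1) * ∫ z, ‖z‖ * K z := by
  have hdim : Module.finrank ℝ (EuclideanSpace ℝ (Fin k)) = k := finrank_euclideanSpace_fin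
  -- key pointwise Lipschitz estimate
  have key : ∀ u : EuclideanSpace ℝ (Fin k),
      |f (x + h • u) - f x| ≤ (L : ℝ) * (h * ‖u‖) := by
    intro u
    have := hfLip.dist_le_mul (x + h • u) x
    rw [dist_eq_norm, dist_eq_norm, add_sub_cancel_left, norm_smul] at this
    simp only [Real.norm_eq_abs, abs_of_pos hh] at this
    exact this
  set g : EuclideanSpace ℝ (Fin k) → ℝ := fun u => K u * f (x + h • u) with hg_def
  have hcont : Continuous fun u : EuclideanSpace ℝ (Fin k) => f (x + h • u) := by
    exact hfLip.continuous.comp (continuous_const.add (continuous_id.const_smul h))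
  have hg_meas : AEStronglyMeasurable g volume := by
    exact hKmeas.aestronglyMeasurable.mul hcont.aestronglyMeasurable
  have hbound_int :
      Integrable (fun u : EuclideanSpace ℝ (Fin k) =>
        K u * f x + (L : ℝ) * h * (‖u‖ * K u)) := by
    exact (hKint.mul_const (f x)).add (hKnorm.const_mul ((L : ℝ) * h))
  have hptbound : ∀ u : EuclideanSpace ℝ (Fin k),
      ‖g u‖ ≤ K u * f x + (L : ℝ) * h * (‖u‖ * K u) := by
    intro u
    have h1 : |f (x + h • u)| ≤ f x + (L : ℝ) * h * ‖u‖ := by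
      have h2 := key u
      rw [abs_of_nonneg (hf0 _)]
      have := (le_abs_self (f (x + h • u) - f x)).trans h2
      nlinarith
    calc ‖g u‖ = K u * |f (x + h • u)| := by
          rw [hg_def, Real.norm_eq_abs, abs_mul, abs_of_nonneg (hK0 u)]
      _ ≤ K u * (f x + (L : ℝ) * h * ‖u‖) := mul_le_mul_of_nonneg_left h1 (hK0 u)
      _ = K u * f x + (L : ℝ) * h * (‖u‖ * K u) := by ring
  have hg_int : Integrable g := Integrable.mono' hbound_int hg_meas
    (Filter.Eventually.of_forall hptbound)
  -- change of variables
  have step1 : (∫ z, K (h⁻¹ • (z - x)) * f z) = ∫ w, K (h⁻¹ • w) * f (x + w) := by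
    rw [← integral_sub_right_eq_self (fun w => K (h⁻¹ • w) * f (x + w)) x]
    congr 1; ext z; congr 2; abel
  have step2 : (∫ w, K (h⁻¹ • w) * f (x + w)) = h ^ k * ∫ u, g u := by
    have := MeasureTheory.Measure.integral_comp_inv_smul_of_nonneg
      (volume : Measure (EuclideanSpace ℝ (Fin k))) g hh.le
    rw [hdim, smul_eq_mul] at this
    rw [← this]
    congr 1; ext w
    rw [hg_def]
    simp only [smul_smul, mul_inv_cancel₀ hh.ne', one_smul]
  have hKfx : (∫ u, K u * f x) = (∫ z, K z) * f x := integral_mul_const _ _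
  have split : (∫ z, K (h⁻¹ • (z - x)) * f z) - h ^ k * f x * (∫ z, K z)
      = h ^ k * ∫ u, K u * (f (x + h • u) - f x) := by
    have hsub : (∫ u, K u * (f (x + h • u) - f x))
        = (∫ u, g u) - ∫ u, K u * f x := by
      rw [← integral_sub hg_int (hKint.mul_const (f x))]
      congr 1; ext u; rw [hg_def]; ring
    rw [step1, step2, hsub, hKfx]; ring
  rw [split]
  have habs : |(∫ u, K u * (f (x + h • u) - f x))|
      ≤ ∫ u, (L : ℝ) * h * (‖u‖ * K u) := by
    rw [← Real.norm_eq_abs]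
    refine (norm_integral_le_integral_norm _).trans ?_
    refine integral_mono_of_nonneg (Filter.Eventually.of_forall fun u => norm_nonneg _)
      (hKnorm.const_mul ((L : ℝ) * h)) (Filter.Eventually.of_forall fun u => ?_)
    calc ‖K u * (f (x + h • u) - f x)‖ = K u * |f (x + h • u) - f x| := by
          rw [Real.norm_eq_abs, abs_mul, abs_of_nonneg (hK0 u)]
      _ ≤ K u * ((L : ℝ) * (h * ‖u‖)) := mul_le_mul_of_nonneg_left (key u) (hK0 u)
      _ = (L : ℝ) * h * (‖u‖ * K u) := by ring
  have hint : (∫ u : EuclideanSpace ℝ (Fin k), (L : ℝ) * h * (‖u‖ * K u))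
      = (L : ℝ) * h * ∫ u, ‖u‖ * K u := integral_const_mul _ _
  rw [abs_mul, abs_of_nonneg (pow_nonneg hh.le k)]
  calc h ^ k * |(∫ u, K u * (f (x + h • u) - f x))|
      ≤ h ^ k * ((L : ℝ) * h * ∫ u, ‖u‖ * K u) := by
        rw [← hint]; exact mul_le_mul_of_nonneg_left habs (pow_nonneg hh.le k)
    _ = (L : ℝ) * h ^ (k + 1) * ∫ z, ‖z‖ * K z := by rw [pow_succ]; ring
end

section
/- For every x ∈ ℝ^k and every h > 0, |∫_{ℝ^k} K((z − x)/h)²·f(z) dz − h^k·f(x)·ν| ≤ L·h^{k+1}·K̄·μ₁. -/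
open MeasureTheory
open scoped NNReal ENNReal

/-- Let `k ≥ 1`, let `f : ℝ^k → [0,∞)` be an integrable, `L`-Lipschitz
function, and let `K : ℝ^k → [0,∞)` be measurable with
`K̄ := sup_z (1+‖z‖)·K(z) < ∞`, `μ₁ := ∫ ‖z‖·K(z) dz < ∞` and `ν := ∫ K² < ∞`.
Then for every `x ∈ ℝ^k` and every `h > 0`,
`|∫ K((z − x)/h)²·f(z) dz − h^k·f(x)·ν| ≤ L·h^(k+1)·K̄·μ₁`. -/
theorem stmt18 (k : ℕ) (hk : 1 ≤ k) (L : ℝ≥0)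
    (f : EuclideanSpace ℝ (Fin k) → ℝ) (hf0 : ∀ z, 0 ≤ f z)
    (hfint : Integrable f) (hfLip : LipschitzWith L f)
    (K : EuclideanSpace ℝ (Fin k) → ℝ) (hKmeas : Measurable K) (hK0 : ∀ z, 0 ≤ K z)
    (hKbdd : BddAbove (Set.range fun z => (1 + ‖z‖) * K z))
    (hKnorm : Integrable (fun z => ‖z‖ * K z))
    (hKsq : Integrable (fun z => (K z) ^ 2))
    (x : EuclideanSpace ℝ (Fin k)) (h : ℝ) (hh : 0 < h) :
    |(∫ z, (K (h⁻¹ • (z - x))) ^ 2 * f z) - h ^ k * f x * (∫ z, (K z) ^ 2)|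
      ≤ (L : ℝ) * h ^ (k + 1) * (⨆ z, (1 + ‖z‖) * K z) * ∫ z, ‖z‖ * K z := by
  set M : ℝ := ⨆ z, (1 + ‖z‖) * K z with hM
  have hMle : ∀ z, (1 + ‖z‖) * K z ≤ M := fun z =>
    le_ciSup hKbdd z
  have hM0 : 0 ≤ M := le_trans (mul_nonneg (by positivity) (hK0 x)) (hMle x)
  have hKle : ∀ z, K z ≤ M := fun z => by
    have := hMle z
    nlinarith [hK0 z, norm_nonneg z]
  -- Step 1: translate by x
  have hd : Module.finrank ℝ (EuclideanSpace ℝ (Fin k)) = k := finrank_euclideanSpace_fin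
  have step1 : (∫ z, (K (h⁻¹ • (z - x))) ^ 2 * f z)
      = ∫ z, (K (h⁻¹ • z)) ^ 2 * f (z + x) := by
    rw [← integral_add_right_eq_self (fun z => (K (h⁻¹ • (z - x))) ^ 2 * f z) x]
    simp
  -- Step 2: rescale
  have step2 : (∫ z, (K (h⁻¹ • z)) ^ 2 * f (z + x))
      = h ^ k * ∫ u, (K u) ^ 2 * f (h • u + x) := by
    have key := Measure.integral_comp_inv_smul_of_nonneg (volume : Measure (EuclideanSpace ℝ (Fin k)))
      (fun u => (K u) ^ 2 * f (h • u + x)) hh.le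
    rw [hd] at key
    have eq1 : (∫ z, (K (h⁻¹ • z)) ^ 2 * f (z + x))
        = ∫ z, (fun u => (K u) ^ 2 * f (h • u + x)) (h⁻¹ • z) := by
      refine integral_congr_ae (Filter.Eventually.of_forall fun z => ?_)
      simp [smul_smul, mul_inv_cancel₀ hh.ne']
    rw [eq1, key, smul_eq_mul]
  -- the difference integrand and its bound
  set g : EuclideanSpace ℝ (Fin k) → ℝ := fun u => (K u) ^ 2 * (f (h • u + x) - f x) with hg
  have hgbound : ∀ u, |g u| ≤ (L : ℝ) * h * M * (‖u‖ * K u) := by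
    intro u
    have hdf : |f (h • u + x) - f x| ≤ (L : ℝ) * (h * ‖u‖) := by
      have := hfLip.dist_le_mul (h • u + x) x
      rw [Real.dist_eq] at this
      calc |f (h • u + x) - f x| ≤ (L : ℝ) * dist (h • u + x) x := this
        _ = (L : ℝ) * (h * ‖u‖) := by
            rw [dist_eq_norm, add_sub_cancel_right, norm_smul, Real.norm_eq_abs,
              abs_of_pos hh]
    calc |g u| = (K u) ^ 2 * |f (h • u + x) - f x| := by
          rw [hg, abs_mul, abs_of_nonneg (by positivity)]
      _ ≤ (K u * M) * ((L : ℝ) * (h * ‖u‖)) := by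
          have h1 : (K u) ^ 2 ≤ K u * M := by
            have := hKle u; nlinarith [hK0 u]
          have h2 : (0:ℝ) ≤ K u ^ 2 := by positivity
          have h3 : (0:ℝ) ≤ (L : ℝ) * (h * ‖u‖) := by positivity
          exact mul_le_mul h1 hdf (abs_nonneg _) (mul_nonneg (hK0 u) hM0)
      _ = (L : ℝ) * h * M * (‖u‖ * K u) := by ring
  have hgmeas : AEStronglyMeasurable g volume := by
    apply AEStronglyMeasurable.mul
    · exact (hKmeas.pow_const 2).aestronglyMeasurable
    · exact ((hfLip.continuous.comp ((continuous_const_smul h).add continuous_const)).sub continuous_const).aestronglyMeasurable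
  have hgint : Integrable g := by
    refine (hKnorm.const_mul ((L : ℝ) * h * M)).mono hgmeas
      (Filter.Eventually.of_forall fun u => ?_)
    rw [Real.norm_eq_abs, Real.norm_eq_abs]
    exact (hgbound u).trans (le_abs_self _)
  -- split the integral
  have step3 : (∫ u, (K u) ^ 2 * f (h • u + x))
      = (∫ u, g u) + f x * ∫ z, (K z) ^ 2 := by
    have h2 : Integrable (fun u => (K u) ^ 2 * f x) := hKsq.mul_const _
    have : (fun u => (K u) ^ 2 * f (h • u + x)) = fun u => g u + (K u) ^ 2 * f x := by
      funext u; simp [hg]; ring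
    rw [this, integral_add hgint h2, integral_mul_const]
    ring
  -- bound |∫ g|
  have hIg : |∫ u, g u| ≤ (L : ℝ) * h * M * ∫ z, ‖z‖ * K z := by
    calc |∫ u, g u| ≤ ∫ u, |g u| := by
          simpa [Real.norm_eq_abs] using norm_integral_le_integral_norm g
      _ ≤ ∫ u, (L : ℝ) * h * M * (‖u‖ * K u) :=
          integral_mono hgint.abs ((hKnorm.const_mul _)) hgbound
      _ = (L : ℝ) * h * M * ∫ z, ‖z‖ * K z := integral_const_mul _ _
  -- put everything together
  rw [step1, step2, step3]
  have : h ^ k * ((∫ u, g u) + f x * ∫ z, (K z) ^ 2) - h ^ k * f x * (∫ z, (K z) ^ 2)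
      = h ^ k * ∫ u, g u := by ring
  rw [this, abs_mul, abs_of_pos (pow_pos hh k)]
  calc h ^ k * |∫ u, g u| ≤ h ^ k * ((L : ℝ) * h * M * ∫ z, ‖z‖ * K z) := by
        exact mul_le_mul_of_nonneg_left hIg (by positivity)
    _ = (L : ℝ) * h ^ (k + 1) * M * ∫ z, ‖z‖ * K z := by ring
  done
end
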